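/- arXiv:2311.08367 — 2 statements merged into one kernel-verified Lean document; each statement's English description precedes it below -/
import Mathlib

section
/- Let G be an n-node graph with arboricity at most α, let 0 < ε < 1, β ≥ 1, d ≥ 2(1+ε)α, and L = 2 + ⌈log_{1+ε} n⌉. Then for any (β, d, L)-decomposition (Z_1, …, Z_L) of G, the top set Z_L is empty. -/
/-!
Every vertex of `Z (i+1)` has degree at least `d ≥ 2(1+ε)α` in `G[Z i]`, while `G[Z i]` has at
most `α |Z i|` edges, so double counting gives `(1+ε) |Z (i+1)| ≤ |Z i|`. Iterating,
`(1+ε)^(L-1) |Z L| ≤ n ≤ (1+ε)^(L-2)`, which forces `|Z L| = 0`.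
-/

open Finset

open scoped Classical in
/-- The edges of the subgraph of `G` induced by the vertex set `S`. -/
noncomputable def inducedEdges {V : Type*} [Fintype V] [DecidableEq V]
    (G : SimpleGraph V) [DecidableRel G.Adj] (S : Finset V) : Finset (Sym2 V) :=
  G.edgeFinset.filter (fun e => ∀ x ∈ e, x ∈ S)

/-- `G` has arboricity at most `α`. -/
def ArboricityLE {V : Type*} [Fintype V] [DecidableEq V]
    (G : SimpleGraph V) [DecidableRel G.Adj] (α : ℝ) : Prop :=
  ∀ S : Finset V, 2 ≤ S.card → ((inducedEdges G S).card : ℝ) ≤ α * ((S.card : ℝ) - 1)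

/-- The degree of `u` in the subgraph of `G` induced by `Z`. -/
def degIn {V : Type*} [Fintype V] [DecidableEq V]
    (G : SimpleGraph V) [DecidableRel G.Adj] (Z : Finset V) (u : V) : ℕ :=
  (Z.filter (fun w => G.Adj u w)).card

/-- A `(β, d, L)`-decomposition of `G`: a nested sequence
`Z L ⊆ ⋯ ⊆ Z 1 = V` such that for all `i ∈ [L-1]`, every vertex of `Z i` of degree
`> β d` in `G[Z i]` lies in `Z (i+1)`, and no vertex of `Z i` of degree `< d` in
`G[Z i]` lies in `Z (i+1)`. -/
def IsDecomposition {V : Type*} [Fintype V] [DecidableEq V]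
    (G : SimpleGraph V) [DecidableRel G.Adj] (β d : ℝ) (L : ℕ)
    (Z : ℕ → Finset V) : Prop :=
  Z 1 = Finset.univ ∧
  (∀ i, 1 ≤ i → i < L → Z (i + 1) ⊆ Z i) ∧
  (∀ i, 1 ≤ i → i < L → ∀ u ∈ Z i,
    (β * d < (degIn G (Z i) u : ℝ) → u ∈ Z (i + 1)) ∧
    ((degIn G (Z i) u : ℝ) < d → u ∉ Z (i + 1)))

theorem Real.le_pow_natCeil_logb {b x : ℝ} (hb : 1 < b) (hx : 0 < x) :
    x ≤ b ^ ⌈Real.logb b x⌉₊ := by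
  rw [← Real.rpow_natCast, ← Real.logb_le_iff_le_rpow hb hx]
  exact Nat.le_ceil _

section

variable {V : Type*} [Fintype V] [DecidableEq V] (G : SimpleGraph V) [DecidableRel G.Adj]

theorem sum_degIn_eq_two_mul_card_inducedEdges (Z : Finset V) :
    ∑ u ∈ Z, degIn G Z u = 2 * #(inducedEdges G Z) := by
  classical
  set H := ((⊤ : G.Subgraph).induce (Z : Set V)).spanningCoe
  have hH : ∀ u w, H.Adj u w ↔ u ∈ Z ∧ w ∈ Z ∧ G.Adj u w := by
    simp [H]
  have hedges : inducedEdges G Z = H.edgeFinset := by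
    ext e
    induction e using Sym2.ind with
    | _ a b => simp [inducedEdges, hH]; tauto
  have hdeg : ∀ u ∈ Z, degIn G Z u = H.degree u := by
    intro u hu
    rw [← SimpleGraph.card_neighborFinset_eq_degree, degIn]
    congr 1; ext w; simp [hH, hu]
  have hdeg0 : ∀ u ∉ Z, H.degree u = 0 := by
    intro u hu
    rw [← SimpleGraph.card_neighborFinset_eq_degree, card_eq_zero, eq_empty_iff_forall_notMem]
    simp [hH, hu]
  rw [hedges, ← SimpleGraph.sum_degrees_eq_twice_card_edges, sum_congr rfl hdeg]
  exact sum_subset (subset_univ Z) fun u _ hu => hdeg0 u hu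

theorem mul_card_le_two_mul_card_inducedEdges {Z Z' : Finset V} {d : ℝ} (hZ' : Z' ⊆ Z)
    (hdeg : ∀ u ∈ Z', d ≤ degIn G Z u) :
    d * #Z' ≤ 2 * #(inducedEdges G Z) := by
  calc d * #Z' = ∑ _u ∈ Z', d := by rw [sum_const, nsmul_eq_mul, mul_comm]
    _ ≤ ∑ u ∈ Z', (degIn G Z u : ℝ) := sum_le_sum hdeg
    _ ≤ ∑ u ∈ Z, (degIn G Z u : ℝ) :=
      sum_le_sum_of_subset_of_nonneg hZ' fun _ _ _ => Nat.cast_nonneg _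
    _ = 2 * #(inducedEdges G Z) := by
      exact_mod_cast sum_degIn_eq_two_mul_card_inducedEdges G Z

theorem inducedEdges_eq_empty_of_card_lt_two {S : Finset V} (hS : #S < 2) :
    inducedEdges G S = ∅ := by
  refine eq_empty_iff_forall_notMem.mpr fun e he => ?_
  induction e using Sym2.ind with
  | _ a b =>
    simp only [inducedEdges, mem_filter, SimpleGraph.mem_edgeFinset, SimpleGraph.mem_edgeSet] at he
    obtain ⟨hab, hS'⟩ := he
    have : 1 < #S := one_lt_card.mpr ⟨a, hS' a (by simp), b, hS' b (by simp), hab.ne⟩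
    omega

variable {G}

theorem ArboricityLE.card_inducedEdges_le {α : ℝ} (hG : ArboricityLE G α) (hα : 0 ≤ α)
    (S : Finset V) : #(inducedEdges G S) ≤ α * #S := by
  by_cases hS : 2 ≤ #S
  · exact (hG S hS).trans (by nlinarith)
  · rw [inducedEdges_eq_empty_of_card_lt_two G (by omega)]
    simpa using by positivity

theorem ArboricityLE.mul_card_le_of_le_degIn {α c d : ℝ} (hG : ArboricityLE G α) (hα : 0 < α)
    (hd : 2 * c * α ≤ d) {Z Z' : Finset V} (hZ' : Z' ⊆ Z)
    (hdeg : ∀ u ∈ Z', d ≤ degIn G Z u) :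
    c * #Z' ≤ #Z := by
  -- `2cα |Z'| ≤ d |Z'| ≤ 2 |E(Z)| ≤ 2α |Z|`
  have hZ'_nonneg : (0 : ℝ) ≤ #Z' := Nat.cast_nonneg _
  have hdegsum := mul_card_le_two_mul_card_inducedEdges G hZ' hdeg
  have hedges := hG.card_inducedEdges_le hα.le Z
  have hscaled : (2 * α) * (c * #Z') ≤ (2 * α) * #Z := by nlinarith
  exact le_of_mul_le_mul_left hscaled (by positivity)

namespace IsDecomposition

variable {β d : ℝ} {L : ℕ} {Z : ℕ → Finset V}

theorem le_degIn (hZ : IsDecomposition G β d L Z) {i : ℕ} (hi : 1 ≤ i) (hiL : i < L)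
    {u : V} (hu : u ∈ Z (i + 1)) : d ≤ degIn G (Z i) u :=
  not_lt.mp fun hlt => (hZ.2.2 i hi hiL u (hZ.2.1 i hi hiL hu)).2 hlt hu

theorem mul_card_succ_le (hZ : IsDecomposition G β d L Z) {α c : ℝ} (hG : ArboricityLE G α)
    (hα : 0 < α) (hd : 2 * c * α ≤ d) {i : ℕ} (hi : 1 ≤ i) (hiL : i < L) :
    c * #(Z (i + 1)) ≤ #(Z i) :=
  hG.mul_card_le_of_le_degIn hα hd (hZ.2.1 i hi hiL) fun _ hu => hZ.le_degIn hi hiL hu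

theorem pow_mul_card_le (hZ : IsDecomposition G β d L Z) {α c : ℝ} (hG : ArboricityLE G α)
    (hα : 0 < α) (hc : 0 ≤ c) (hd : 2 * c * α ≤ d) {k : ℕ} (hk : k + 1 ≤ L) :
    c ^ k * #(Z (k + 1)) ≤ Fintype.card V := by
  induction k with
  | zero => simp [hZ.1]
  | succ k ih =>
    calc c ^ (k + 1) * #(Z (k + 1 + 1)) = c ^ k * (c * #(Z (k + 1 + 1))) := by ring
      _ ≤ c ^ k * #(Z (k + 1)) := by
        gcongr; exact hZ.mul_card_succ_le hG hα hd (by omega) (by omega)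
      _ ≤ Fintype.card V := ih (by omega)

end IsDecomposition

end

theorem statement3_general {V : Type*} [Fintype V] [DecidableEq V]
    (G : SimpleGraph V) [DecidableRel G.Adj] (α ε β d : ℝ)
    (hα : 0 < α) (hε : 0 < ε)
    (hd : 2 * (1 + ε) * α ≤ d) (L : ℕ)
    (hL : L = 2 + ⌈Real.logb (1 + ε) (Fintype.card V)⌉₊)
    (hG : ArboricityLE G α) (Z : ℕ → Finset V)
    (hZ : IsDecomposition G β d L Z) :
    Z L = ∅ := by
  set k := ⌈Real.logb (1 + ε) (Fintype.card V)⌉₊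
  rw [← not_nonempty_iff_eq_empty]
  rintro ⟨u, hu⟩
  have hZL : (1 : ℝ) ≤ #(Z L) := by exact_mod_cast card_pos.mpr ⟨u, hu⟩
  have hV : (0 : ℝ) < Fintype.card V := by exact_mod_cast Fintype.card_pos_iff.mpr ⟨u⟩
  have hshrink : (1 + ε) ^ (k + 1) * #(Z L) ≤ Fintype.card V := by
    have := hZ.pow_mul_card_le hG hα (by linarith) hd (k := k + 1) (by omega)
    rwa [show k + 1 + 1 = L by omega] at this
  refine lt_irrefl ((1 + ε) ^ (k + 1)) ?_
  calc (1 + ε) ^ (k + 1) ≤ (1 + ε) ^ (k + 1) * #(Z L) :=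
        le_mul_of_one_le_right (by positivity) hZL
    _ ≤ Fintype.card V := hshrink
    _ ≤ (1 + ε) ^ k := Real.le_pow_natCeil_logb (by linarith) hV
    _ < (1 + ε) ^ (k + 1) := pow_lt_pow_right₀ (by linarith) k.lt_succ_self

/-- if `G` is an `n`-node graph of arboricity at most `α`, `0 < ε < 1`,
`β ≥ 1`, `d ≥ 2(1+ε)α` and `L = 2 + ⌈log_{1+ε} n⌉`, then the top set of any
`(β, d, L)`-decomposition of `G` is empty. -/
theorem statement3 {V : Type*} [Fintype V] [DecidableEq V]
    (G : SimpleGraph V) [DecidableRel G.Adj] (α ε β d : ℝ)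
    (hα : 0 < α) (hε : 0 < ε) (hε1 : ε < 1) (hβ : 1 ≤ β)
    (hd : 2 * (1 + ε) * α ≤ d) (L : ℕ)
    (hL : L = 2 + ⌈Real.logb (1 + ε) (Fintype.card V)⌉₊)
    (hG : ArboricityLE G α) (Z : ℕ → Finset V)
    (hZ : IsDecomposition G β d L Z) :
    Z L = ∅ :=
  statement3_general G α ε β d hα hε hd L hL hG Z hZ
end

section
/- Every graph G with maximum degree Δ and arboricity at most α admits a proper edge coloring using at most Δ + 2α − 1 colors. -/
/-!
On its non-isolated vertices a graph of arboricity at most `α` has fewer than `α |S|` edges,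
hence average degree below `2α`; so every nonempty subgraph has an edge `uv` with
`deg v ≤ 2α - 1`. Delete such an edge, colour the rest by induction, and note that `uv` meets
at most `(Δ - 1) + (2α - 2)` other edges, which leaves one of `Δ + 2α - 1` colours free for it.
-/

open Finset

namespace SimpleGraph

variable {V ι : Type*}

def IsProperEdgeColoring (H : SimpleGraph V) (C : Finset ι) (χ : Sym2 V → ι) : Prop :=
  (∀ e ∈ H.edgeSet, χ e ∈ C) ∧
    ∀ e ∈ H.edgeSet, ∀ f ∈ H.edgeSet, e ≠ f → (∃ x, x ∈ e ∧ x ∈ f) → χ e ≠ χ f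

theorem isProperEdgeColoring_bot (C : Finset ι) (χ : Sym2 V → ι) :
    IsProperEdgeColoring ⊥ C χ := by
  simp [IsProperEdgeColoring]

theorem deleteEdges_lt_of_mem_edgeSet {H : SimpleGraph V} {e : Sym2 V} (he : e ∈ H.edgeSet) :
    H.deleteEdges {e} < H := by
  refine lt_of_le_of_ne (deleteEdges_le _) ?_
  simpa [deleteEdges_eq_self] using he

theorem IsProperEdgeColoring.extend [DecidableEq V] {H : SimpleGraph V} {u v : V}
    [Fintype (H.neighborSet u)] [Fintype (H.neighborSet v)] {C : Finset ι} {χ : Sym2 V → ι}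
    (hχ : IsProperEdgeColoring (H.deleteEdges {s(u, v)}) C χ) (huv : H.Adj u v)
    (hdeg : H.degree u + H.degree v ≤ #C + 1) :
    ∃ χ', IsProperEdgeColoring H C χ' := by
  classical
  set e := s(u, v)
  have he : e ∈ H.edgeSet := huv
  have heu : e ∈ H.incidenceFinset u := by simp [incidenceSet, he, e]
  have hev : e ∈ H.incidenceFinset v := by simp [incidenceSet, he, e]
  set F : Finset ι := ((H.incidenceFinset u).erase e ∪ (H.incidenceFinset v).erase e).image χ
  have hF : #F < #C := by
    have hu := (H.degree_pos_iff_exists_adj u).2 ⟨v, huv⟩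
    have hv := (H.degree_pos_iff_exists_adj v).2 ⟨u, huv.symm⟩
    calc #F ≤ #((H.incidenceFinset u).erase e ∪ (H.incidenceFinset v).erase e) := card_image_le
      _ ≤ #((H.incidenceFinset u).erase e) + #((H.incidenceFinset v).erase e) :=
        card_union_le _ _
      _ = (H.degree u - 1) + (H.degree v - 1) := by
        rw [card_erase_of_mem heu, card_erase_of_mem hev, card_incidenceFinset_eq_degree,
          card_incidenceFinset_eq_degree]
      _ < #C := by omega
  obtain ⟨c, hcC, hcF⟩ := exists_mem_notMem_of_card_lt_card hF
  have hmemF : ∀ f ∈ H.edgeSet, f ≠ e → (∃ x, x ∈ e ∧ x ∈ f) → χ f ∈ F := by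
    rintro f hf hfe ⟨x, hxe, hxf⟩
    refine mem_image_of_mem χ ?_
    rcases Sym2.mem_iff.1 hxe with rfl | rfl
    · exact mem_union_left _ (mem_erase.2 ⟨hfe, by simp [incidenceSet, hf, hxf]⟩)
    · exact mem_union_right _ (mem_erase.2 ⟨hfe, by simp [incidenceSet, hf, hxf]⟩)
  have hdel : ∀ f ∈ H.edgeSet, f ≠ e → f ∈ (H.deleteEdges {e}).edgeSet := fun f hf hfe =>
    (edgeSet_deleteEdges _).symm ▸ ⟨hf, hfe⟩
  refine ⟨Function.update χ e c, fun f hf => ?_, fun f hf g hg hfg hfg' => ?_⟩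
  · rcases eq_or_ne f e with rfl | hfe
    · simpa using hcC
    · simpa [hfe] using hχ.1 f (hdel f hf hfe)
  rcases eq_or_ne f e with rfl | hfe
  · have hgF := hmemF g hg hfg.symm hfg'
    simp only [Function.update_self, Function.update_of_ne hfg.symm]
    exact fun h => hcF (h ▸ hgF)
  rcases eq_or_ne g e with rfl | hge
  · obtain ⟨x, hxf, hxg⟩ := hfg'
    have hfF := hmemF f hf hfe ⟨x, hxg, hxf⟩
    simp only [Function.update_self, Function.update_of_ne hfe]
    exact fun h => hcF (h ▸ hfF)
  simp only [Function.update_of_ne hfe, Function.update_of_ne hge]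
  exact hχ.2 f (hdel f hf hfe) g (hdel g hg hge) hfg hfg'

open scoped Classical in
theorem exists_isProperEdgeColoring_of_forall_exists_adj [Fintype V] [Nonempty ι] (G : SimpleGraph V) (C : Finset ι)
    (h : ∀ H ≤ G, H ≠ ⊥ → ∃ u v, H.Adj u v ∧ H.degree u + H.degree v ≤ #C + 1) :
    ∃ χ, IsProperEdgeColoring G C χ := by
  suffices ∀ H ≤ G, ∃ χ, IsProperEdgeColoring H C χ from this G le_rfl
  intro H
  induction H using WellFoundedLT.induction with
  | _ H ih =>
  intro hHG
  rcases eq_or_ne H ⊥ with rfl | hH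
  · exact ⟨fun _ => Classical.arbitrary ι, isProperEdgeColoring_bot _ _⟩
  obtain ⟨u, v, huv, hdeg⟩ := h H hHG hH
  have hlt := deleteEdges_lt_of_mem_edgeSet (show s(u, v) ∈ H.edgeSet from huv)
  obtain ⟨χ, hχ⟩ := ih _ hlt (hlt.le.trans hHG)
  exact hχ.extend huv hdeg

end SimpleGraph

section Arboricity

variable {V : Type*} [Fintype V] [DecidableEq V]

theorem ArboricityLE.mono {G H : SimpleGraph V} [DecidableRel G.Adj] [DecidableRel H.Adj]
    {α : ℝ} (hG : ArboricityLE G α) (hHG : H ≤ G) : ArboricityLE H α := by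
  intro S hS
  refine le_trans ?_ (hG S hS)
  exact_mod_cast card_le_card (filter_subset_filter _ (SimpleGraph.edgeFinset_mono hHG))

theorem ArboricityLE.exists_adj_degree_lt {H : SimpleGraph V} [DecidableRel H.Adj] {α : ℕ}
    (hH : ArboricityLE H α) (hne : H ≠ ⊥) : ∃ u v, H.Adj u v ∧ H.degree v < 2 * α := by
  by_contra! hlarge
  obtain ⟨a, b, hab⟩ := SimpleGraph.ne_bot_iff_exists_adj.1 hne
  set S := ({v | H.degree v ≠ 0} : Finset V)
  have hmemS : ∀ {v w}, H.Adj v w → v ∈ S := fun hvw => by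
    simpa [S, ← Nat.pos_iff_ne_zero] using (H.degree_pos_iff_exists_adj _).2 ⟨_, hvw⟩
  have hS : inducedEdges H S = H.edgeFinset := by
    refine filter_true_of_mem fun e he => ?_
    induction e with | h x y =>
    intro z hz
    rcases Sym2.mem_iff.1 hz with rfl | rfl
    · exact hmemS (SimpleGraph.mem_edgeFinset.1 he)
    · exact hmemS (SimpleGraph.mem_edgeFinset.1 he).symm
  have hS2 : 2 ≤ #S := (card_pair hab.ne).symm.le.trans
    (card_le_card (insert_subset (hmemS hab) (singleton_subset_iff.2 (hmemS hab.symm))))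
  have hsum : ∑ v ∈ S, H.degree v = 2 * #H.edgeFinset := by
    rw [sum_filter_ne_zero, H.sum_degrees_eq_twice_card_edges]
  have hlow : 2 * α * #S ≤ 2 * #H.edgeFinset := by
    rw [← hsum, mul_comm, ← smul_eq_mul, ← sum_const]
    refine sum_le_sum fun v hv => ?_
    obtain ⟨w, hvw⟩ := (H.degree_pos_iff_exists_adj v).1 (Nat.pos_of_ne_zero (mem_filter.1 hv).2)
    exact hlarge w v hvw.symm
  have hup := hH S hS2
  have hE : 1 ≤ #H.edgeFinset := card_pos.2 ⟨s(a, b), SimpleGraph.mem_edgeFinset.2 hab⟩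
  rw [hS] at hup
  have hS2' : (2 : ℝ) ≤ #S := by exact_mod_cast hS2
  have hlow' : (2 * α * #S : ℝ) ≤ 2 * #H.edgeFinset := by exact_mod_cast hlow
  have hE' : (1 : ℝ) ≤ #H.edgeFinset := by exact_mod_cast hE
  nlinarith

end Arboricity

/-- every graph of maximum degree `Δ` and arboricity at most `α` admits a
proper edge coloring with colors from `{1, …, Δ + 2α - 1}`. -/
theorem statement8 {V : Type*} [Fintype V] [DecidableEq V]
    (G : SimpleGraph V) [DecidableRel G.Adj] (α : ℕ)
    (hG : ArboricityLE G (α : ℝ)) :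
    ∃ χ : Sym2 V → ℕ,
      (∀ e ∈ G.edgeSet, χ e ∈ Finset.Icc 1 (G.maxDegree + 2 * α - 1)) ∧
      (∀ e ∈ G.edgeSet, ∀ f ∈ G.edgeSet, e ≠ f → (∃ x, x ∈ e ∧ x ∈ f) → χ e ≠ χ f) := by
  classical
  refine G.exists_isProperEdgeColoring_of_forall_exists_adj _ fun H hHG hH => ?_
  obtain ⟨u, v, huv, hv⟩ := (hG.mono hHG).exists_adj_degree_lt hH
  have hu : H.degree u ≤ G.maxDegree :=
    (SimpleGraph.degree_le_of_le hHG).trans (G.degree_le_maxDegree u)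
  refine ⟨u, v, huv, ?_⟩
  rw [Nat.card_Icc]
  omega
end
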